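/- arXiv:1309.3950 — 7 statements merged into one kernel-verified Lean document; each statement's English description precedes it below -/
import Mathlib

section
/- Let q(x) = -3/⟨x⟩² on ℝ³ where ⟨x⟩ = √(1+|x|²), and let φ₀ be a unit vector in ℂ⁴. Then the function f(x) = ⟨x⟩⁻³ (I₄ + i α·x) φ₀ satisfies the equation (-i α·∇ + q) f = 0 pointwise on ℝ³, where α = (α₁,α₂,α₃) are the standard 4×4 Dirac alpha matrices. -/
open Matrix Complex MeasureTheory Filter
open scoped RealInnerProductSpace Matrix.Norms.L2Operator

noncomputable section

abbrev R3 := EuclideanSpace ℝ (Fin 3)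
abbrev C4 := EuclideanSpace ℂ (Fin 4)

/-- The Pauli matrices σ₁, σ₂, σ₃. -/
def pauli : Fin 3 → Matrix (Fin 2) (Fin 2) ℂ :=
  ![!![0, 1; 1, 0], !![0, -I; I, 0], !![1, 0; 0, -1]]

/-- The standard 4×4 Dirac alpha matrices αⱼ = [[0,σⱼ],[σⱼ,0]]. -/
def diracAlpha (j : Fin 3) : Matrix (Fin 4) (Fin 4) ℂ :=
  Matrix.reindex finSumFinEquiv finSumFinEquiv
    (Matrix.fromBlocks 0 (pauli j) (pauli j) 0)

/-- α·v = v₁α₁ + v₂α₂ + v₃α₃. -/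
def alphaDot (v : EuclideanSpace ℝ (Fin 3)) : Matrix (Fin 4) (Fin 4) ℂ :=
  ∑ j, (v j : ℂ) • diracAlpha j

/-- Matrix acting on a Euclidean (ℓ²) vector. -/
def mulVecE {n : ℕ} (M : Matrix (Fin n) (Fin n) ℂ) (v : EuclideanSpace ℂ (Fin n)) :
    EuclideanSpace ℂ (Fin n) :=
  (WithLp.equiv 2 _).symm (M.mulVec ((WithLp.equiv 2 _) v))

/-- The massless Dirac operator (-i α·∇ f)(x), defined pointwise. -/
def diracOp (f : R3 → C4) (x : R3) : C4 :=
  (-I) • ∑ j, mulVecE (diracAlpha j) (fderiv ℝ f x (EuclideanSpace.single j 1))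

/-! Write `f = g • u` with `g = ⟨x⟩⁻³` and `u = (1 + iα·x)φ₀`. The Clifford relations
`αⱼαₖ + αₖαⱼ = 2δⱼₖ` give `-iα·∇u = 3φ₀` and `(α·x)² = |x|²`. Since `∇g = -3⟨x⟩⁻² g x`, the
Leibniz rule `-iα·∇(g u) = g (-iα·∇u) - i (α·∇g) u` yields
`-iα·∇f = 3g φ₀ + 3⟨x⟩⁻² g (iα·x - |x|²) φ₀ = 3⟨x⟩⁻² f = -q f`. -/

section MulVecE

variable {n : ℕ} (A B : Matrix (Fin n) (Fin n) ℂ) (v w : EuclideanSpace ℂ (Fin n))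

theorem mulVecE_eq_toLpLinAlgEquiv : mulVecE A v = Matrix.toLpLinAlgEquiv 2 A v :=
  rfl

theorem mulVecE_add_right : mulVecE A (v + w) = mulVecE A v + mulVecE A w :=
  map_add (Matrix.toLpLinAlgEquiv 2 A) v w

theorem mulVecE_smul_right (c : ℂ) : mulVecE A (c • v) = c • mulVecE A v :=
  map_smul (Matrix.toLpLinAlgEquiv 2 A) c v

theorem mulVecE_real_smul_right (r : ℝ) : mulVecE A (r • v) = r • mulVecE A v :=
  LinearMap.map_smul_of_tower (Matrix.toLpLinAlgEquiv 2 A) r v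

theorem mulVecE_add_left : mulVecE (A + B) v = mulVecE A v + mulVecE B v := by
  simp [mulVecE_eq_toLpLinAlgEquiv]

theorem mulVecE_smul_left (c : ℂ) : mulVecE (c • A) v = c • mulVecE A v := by
  simp [mulVecE_eq_toLpLinAlgEquiv]

theorem mulVecE_mul : mulVecE (A * B) v = mulVecE A (mulVecE B v) := by
  simp [mulVecE_eq_toLpLinAlgEquiv, Module.End.mul_apply]

theorem mulVecE_one : mulVecE 1 v = v := by
  simp [mulVecE_eq_toLpLinAlgEquiv]

end MulVecE

theorem pauli_mul_self (j : Fin 3) : pauli j * pauli j = 1 := by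
  fin_cases j <;>
  · ext a b
    fin_cases a <;> fin_cases b <;> simp [pauli]

theorem pauli_anticomm {j k : Fin 3} (h : j ≠ k) :
    pauli j * pauli k + pauli k * pauli j = 0 := by
  fin_cases j <;> fin_cases k <;> first
  | exact absurd rfl h
  | · ext a b
      fin_cases a <;> fin_cases b <;> simp [pauli]

theorem diracAlpha_eq (j : Fin 3) : diracAlpha j =
    Matrix.reindexAlgEquiv ℂ ℂ finSumFinEquiv (Matrix.fromBlocks 0 (pauli j) (pauli j) 0) :=
  rfl

theorem diracAlpha_mul (j k : Fin 3) :
    diracAlpha j * diracAlpha k = Matrix.reindexAlgEquiv ℂ ℂ finSumFinEquiv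
      (Matrix.fromBlocks (pauli j * pauli k) 0 0 (pauli j * pauli k)) := by
  simp [diracAlpha_eq, Matrix.fromBlocks_multiply]

theorem diracAlpha_mul_self (j : Fin 3) : diracAlpha j * diracAlpha j = 1 := by
  rw [diracAlpha_mul, pauli_mul_self, Matrix.fromBlocks_one, map_one]

theorem diracAlpha_anticomm {j k : Fin 3} (h : j ≠ k) :
    diracAlpha j * diracAlpha k + diracAlpha k * diracAlpha j = 0 := by
  rw [diracAlpha_mul, diracAlpha_mul, ← map_add, Matrix.fromBlocks_add, pauli_anticomm h, add_zero,
    Matrix.fromBlocks_zero, map_zero]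

theorem alphaDot_mul_self (v : R3) : alphaDot v * alphaDot v = ((‖v‖ ^ 2 : ℝ) : ℂ) • 1 := by
  have h10 := eq_neg_of_add_eq_zero_left (diracAlpha_anticomm (show (1 : Fin 3) ≠ 0 by decide))
  have h20 := eq_neg_of_add_eq_zero_left (diracAlpha_anticomm (show (2 : Fin 3) ≠ 0 by decide))
  have h21 := eq_neg_of_add_eq_zero_left (diracAlpha_anticomm (show (2 : Fin 3) ≠ 1 by decide))
  simp only [alphaDot, Fin.sum_univ_three, add_mul, mul_add, smul_mul_assoc, mul_smul_comm,
    diracAlpha_mul_self, h10, h20, h21, EuclideanSpace.norm_sq_eq, Real.norm_eq_abs, sq_abs]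
  push_cast
  module

theorem alphaDot_smul (r : ℝ) (v : R3) : alphaDot (r • v) = (r : ℂ) • alphaDot v := by
  simp only [alphaDot, Finset.smul_sum, smul_smul, PiLp.smul_apply, smul_eq_mul, Complex.ofReal_mul]

theorem alphaDot_single (j : Fin 3) : alphaDot (EuclideanSpace.single j 1) = diracAlpha j := by
  simp [alphaDot, ite_smul]

theorem sum_smul_mulVecE_diracAlpha (v : R3) (w : C4) :
    ∑ j, v j • mulVecE (diracAlpha j) w = mulVecE (alphaDot v) w := by
  simp [alphaDot, mulVecE_eq_toLpLinAlgEquiv, map_sum, ← Complex.coe_smul]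

theorem mulVecE_alphaDot_one_add_I_smul_alphaDot (v : R3) (w : C4) :
    mulVecE (alphaDot v) (mulVecE (1 + I • alphaDot v) w) =
      mulVecE (alphaDot v) w + (I * ((‖v‖ ^ 2 : ℝ) : ℂ)) • w := by
  rw [← mulVecE_mul, mul_add, mul_one, mul_smul_comm, alphaDot_mul_self, smul_smul,
    mulVecE_add_left, mulVecE_smul_left, mulVecE_one]

theorem hasFDerivAt_inv_sqrt_one_add_norm_sq_pow {E : Type*} [NormedAddCommGroup E]
    [InnerProductSpace ℝ E] (n : ℕ) (x : E) :
    HasFDerivAt (fun y : E => (√(1 + ‖y‖ ^ 2))⁻¹ ^ n)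
      ((-(n : ℝ) * (1 + ‖x‖ ^ 2)⁻¹ * (√(1 + ‖x‖ ^ 2))⁻¹ ^ n) • innerSL ℝ x) x := by
  have hpos : 0 < 1 + ‖x‖ ^ 2 := by positivity
  have hsqrt := (((hasStrictFDerivAt_norm_sq x).hasFDerivAt).const_add 1).sqrt hpos.ne'
  set s := √(1 + ‖x‖ ^ 2)
  have hs : s ≠ 0 := (Real.sqrt_pos.mpr hpos).ne'
  have hs2 : s ^ 2 = 1 + ‖x‖ ^ 2 := Real.sq_sqrt hpos.le
  refine ((hasDerivAt_inv hs).pow n |>.comp_hasFDerivAt x hsqrt).congr_fderiv ?_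
  rw [smul_smul, two_smul, ← hs2]
  rcases n with _ | m
  · simp
  · match_scalars
    simp only [inv_pow]
    field_simp
    push_cast
    ring

def alphaDotCLM (w : C4) : R3 →L[ℝ] C4 :=
  ∑ j, (EuclideanSpace.proj j : R3 →L[ℝ] ℝ).smulRight (mulVecE (diracAlpha j) w)

theorem alphaDotCLM_apply (w : C4) (y : R3) : alphaDotCLM w y = mulVecE (alphaDot y) w := by
  simp [alphaDotCLM, sum_smul_mulVecE_diracAlpha]

theorem hasFDerivAt_mulVecE_add_smul_alphaDot (M : Matrix (Fin 4) (Fin 4) ℂ) (c : ℂ) (w : C4)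
    (x : R3) : HasFDerivAt (fun y => mulVecE (M + c • alphaDot y) w) (c • alphaDotCLM w) x := by
  have hfun : (fun y => mulVecE (M + c • alphaDot y) w) =
      fun y => mulVecE M w + c • alphaDotCLM w y := by
    funext y
    rw [mulVecE_add_left, mulVecE_smul_left, alphaDotCLM_apply]
  rw [hfun]
  exact ((alphaDotCLM w).hasFDerivAt.const_smul c).const_add _

theorem diracOp_mulVecE_add_smul_alphaDot (M : Matrix (Fin 4) (Fin 4) ℂ) (c : ℂ) (w : C4)
    (x : R3) : diracOp (fun y => mulVecE (M + c • alphaDot y) w) x = (-3 * I * c) • w := by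
  unfold diracOp
  simp only [(hasFDerivAt_mulVecE_add_smul_alphaDot M c w x).fderiv, _root_.smul_apply,
    alphaDotCLM_apply, alphaDot_single, mulVecE_smul_right, ← mulVecE_mul, diracAlpha_mul_self,
    mulVecE_one, Finset.sum_const, Finset.card_univ, Fintype.card_fin]
  module

theorem diracOp_smul {g : R3 → ℝ} {u : R3 → C4} {x v : R3} (hg : HasFDerivAt g (innerSL ℝ v) x)
    (hu : DifferentiableAt ℝ u x) :
    diracOp (fun y => g y • u y) x = g x • diracOp u x - I • mulVecE (alphaDot v) (u x) := by
  have hD : HasFDerivAt (fun y => g y • u y)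
      (g x • fderiv ℝ u x + (innerSL ℝ v).smulRight (u x)) x :=
    hg.smul hu.hasFDerivAt
  unfold diracOp
  rw [hD.fderiv]
  simp only [_root_.add_apply, _root_.smul_apply, ContinuousLinearMap.smulRight_apply,
    innerSL_apply_apply, EuclideanSpace.inner_single_right, conj_trivial, one_mul,
    mulVecE_add_right, mulVecE_real_smul_right, Finset.sum_add_distrib, ← Finset.smul_sum,
    sum_smul_mulVecE_diracAlpha]
  module

theorem stmt0_general (φ₀ : C4)
    (q : R3 → ℝ) (hq : ∀ x, q x = -3 / (1 + ‖x‖ ^ 2))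
    (f : R3 → C4)
    (hf : ∀ x, f x =
      ((Real.sqrt (1 + ‖x‖ ^ 2) : ℂ)) ⁻¹ ^ 3 • mulVecE (1 + I • alphaDot x) φ₀) :
    ∀ x, diracOp f x + (q x : ℂ) • f x = 0 := by
  intro x
  set g : R3 → ℝ := fun y => (√(1 + ‖y‖ ^ 2))⁻¹ ^ 3
  set u : R3 → C4 := fun y => mulVecE (1 + I • alphaDot y) φ₀
  have hfgu : f = fun y => g y • u y := by
    funext y
    rw [hf, ← Complex.coe_smul]
    simp [g, u]
  have hg := hasFDerivAt_inv_sqrt_one_add_norm_sq_pow 3 x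
  rw [← map_smul] at hg
  have hu := (hasFDerivAt_mulVecE_add_smul_alphaDot 1 I φ₀ x).differentiableAt
  rw [hfgu, diracOp_smul hg hu, diracOp_mulVecE_add_smul_alphaDot, alphaDot_smul,
    mulVecE_smul_left, mulVecE_alphaDot_one_add_I_smul_alphaDot, hq]
  simp only [g, u, mulVecE_add_left, mulVecE_one, mulVecE_smul_left, ← Complex.coe_smul]
  have hne : (1 + (‖x‖ : ℂ) ^ 2) ≠ 0 := by exact_mod_cast (by positivity : 1 + ‖x‖ ^ 2 ≠ 0)
  match_scalars
  · field_simp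
    rw [I_sq]
    ring
  · ring

/-- The zero mode of the 3-d massless Dirac operator with potential q(x) = -3/⟨x⟩². -/
theorem stmt0 (φ₀ : C4) (hφ : ‖φ₀‖ = 1)
    (q : R3 → ℝ) (hq : ∀ x, q x = -3 / (1 + ‖x‖ ^ 2))
    (f : R3 → C4)
    (hf : ∀ x, f x =
      ((Real.sqrt (1 + ‖x‖ ^ 2) : ℂ)) ⁻¹ ^ 3 • mulVecE (1 + I • alphaDot x) φ₀) :
    ∀ x, diracOp f x + (q x : ℂ) • f x = 0 :=
  stmt0_general φ₀ q hq f hf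
end
end

section
/- The function ψ(x) = ⟨x⟩⁻² (I₂ + i σ·x) φ₀ on ℝ², with φ₀ a unit vector in ℂ², is not in L²(ℝ²;ℂ²), but ⟨x⟩⁻ˢ ψ ∈ L²(ℝ²;ℂ²) for every s > 0. -/
/-!
Since `σ·x` is Hermitian with `(σ·x)² = |x|²`, we get `(1 + iσ·x)ᴴ (1 + iσ·x) = ⟨x⟩² I₂`, so
`|ψ(x)| = ⟨x⟩⁻¹` and `|⟨x⟩⁻ˢ ψ(x)| = ⟨x⟩⁻¹⁻ˢ`. In polar coordinates on an `n`-dimensional space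
`⟨x⟩⁻ʳ` is integrable iff `n < r`: for `r ≤ n` the radial integrand `ρⁿ⁻¹ ⟨ρ⟩⁻ʳ` dominates a
multiple of `ρ⁻¹` at infinity. In the plane `|ψ|² = ⟨x⟩⁻²` is therefore not integrable, while
`⟨x⟩⁻²⁻²ˢ` is.
-/

open Matrix Complex MeasureTheory Filter
open scoped RealInnerProductSpace Matrix.Norms.L2Operator

noncomputable section

abbrev R2 := EuclideanSpace ℝ (Fin 2)
abbrev C2 := EuclideanSpace ℂ (Fin 2)

/-- The Pauli matrices σ₁, σ₂ (the ones appearing in the 2-d massless Dirac operator). -/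
def pauli2 : Fin 2 → Matrix (Fin 2) (Fin 2) ℂ :=
  ![!![0, 1; 1, 0], !![0, -I; I, 0]]

/-- σ·v = v₁σ₁ + v₂σ₂. -/
def sigmaDot (v : EuclideanSpace ℝ (Fin 2)) : Matrix (Fin 2) (Fin 2) ℂ :=
  ∑ j, (v j : ℂ) • pauli2 j

/-- The 2-d massless Dirac operator (-i σ·∇ f)(x), defined pointwise. -/
def diracOp2 (f : R2 → C2) (x : R2) : C2 :=
  (-I) • ∑ j, mulVecE (pauli2 j) (fderiv ℝ f x (EuclideanSpace.single j 1))

theorem conjTranspose_one_add_I_smul_mul_self {m : Type*} [Fintype m] [DecidableEq m]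
    {S : Matrix m m ℂ} (hS : S.IsHermitian) : (1 + I • S)ᴴ * (1 + I • S) = 1 + S * S := by
  rw [conjTranspose_add, conjTranspose_one, conjTranspose_smul, hS.eq]
  simp only [star_def, conj_I, add_mul, mul_add, one_mul, mul_one, smul_mul_smul_comm, neg_mul,
    I_mul_I, neg_neg, one_smul, neg_smul]
  abel

theorem norm_mulVecE_sq_of_conjTranspose_mul_self {n : ℕ} {M : Matrix (Fin n) (Fin n) ℂ} {c : ℝ}
    (hM : Mᴴ * M = (c : ℂ) • 1) (v : EuclideanSpace ℂ (Fin n)) :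
    ‖mulVecE M v‖ ^ 2 = c * ‖v‖ ^ 2 := by
  rw [show mulVecE M v = toEuclideanLin M v from rfl, ← @inner_self_eq_norm_sq ℂ,
    ← @inner_self_eq_norm_sq ℂ, ← LinearMap.adjoint_inner_right,
    ← toEuclideanLin_conjTranspose_eq_adjoint]
  simp only [Matrix.toLpLin_apply, Matrix.mulVec_mulVec, hM, Matrix.smul_mulVec,
    Matrix.one_mulVec, WithLp.toLp_smul, WithLp.toLp_ofLp, inner_smul_right]
  simp

theorem Continuous.mulVecE {X : Type*} [TopologicalSpace X] {n : ℕ}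
    {M : X → Matrix (Fin n) (Fin n) ℂ} (hM : Continuous M) (v : EuclideanSpace ℂ (Fin n)) :
    Continuous fun x ↦ mulVecE (M x) v :=
  (PiLp.continuous_toLp 2 _).comp (hM.matrix_mulVec continuous_const)

theorem sigmaDot_isHermitian (x : R2) : (sigmaDot x).IsHermitian := by
  ext i j
  fin_cases i <;> fin_cases j <;> simp [sigmaDot, pauli2, Fin.sum_univ_two]

theorem sigmaDot_mul_self (x : R2) : sigmaDot x * sigmaDot x = ((‖x‖ ^ 2 : ℝ) : ℂ) • 1 := by
  rw [EuclideanSpace.norm_sq_eq]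
  ext i j
  fin_cases i <;> fin_cases j <;> simp [sigmaDot, pauli2, Fin.sum_univ_two, Matrix.mul_apply]
  all_goals linear_combination (-(x 1 : ℂ) ^ 2) * I_sq

theorem continuous_sigmaDot : Continuous sigmaDot := by
  unfold sigmaDot
  fun_prop

theorem norm_mulVecE_one_add_I_smul_sigmaDot (x : R2) (v : C2) :
    ‖mulVecE (1 + I • sigmaDot x) v‖ = √(1 + ‖x‖ ^ 2) * ‖v‖ := by
  have hM : (1 + I • sigmaDot x)ᴴ * (1 + I • sigmaDot x) = ((1 + ‖x‖ ^ 2 : ℝ) : ℂ) • 1 := by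
    rw [conjTranspose_one_add_I_smul_mul_self (sigmaDot_isHermitian x), sigmaDot_mul_self,
      ofReal_add, ofReal_one, add_smul, one_smul]
  rw [← Real.sqrt_sq (norm_nonneg _), norm_mulVecE_sq_of_conjTranspose_mul_self hM,
    Real.sqrt_mul (by positivity), Real.sqrt_sq (norm_nonneg v)]

theorem inv_le_two_rpow_mul_pow_mul_one_add_sq_rpow {n : ℕ} {r y : ℝ} (hn : n ≠ 0) (hr : r ≤ n)
    (hy : 1 ≤ y) : y⁻¹ ≤ 2 ^ ((n : ℝ) / 2) * (y ^ (n - 1) * (1 + y ^ 2) ^ (-r / 2)) := by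
  have hy0 : 0 < y := by linarith
  have h_exp : (1 + y ^ 2) ^ (-(n : ℝ) / 2) ≤ (1 + y ^ 2) ^ (-r / 2) :=
    Real.rpow_le_rpow_of_exponent_le (by nlinarith) (by linarith)
  have h_base : (1 + y ^ 2) ^ ((n : ℝ) / 2) ≤ 2 ^ ((n : ℝ) / 2) * y ^ n := calc
    (1 + y ^ 2) ^ ((n : ℝ) / 2) ≤ (2 * y ^ 2) ^ ((n : ℝ) / 2) :=
      Real.rpow_le_rpow (by positivity) (by nlinarith) (by positivity)
    _ = 2 ^ ((n : ℝ) / 2) * y ^ n := by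
      rw [Real.mul_rpow zero_le_two (by positivity), ← Real.rpow_natCast_mul hy0.le,
        Nat.cast_ofNat, mul_div_cancel₀ _ two_ne_zero, Real.rpow_natCast]
  calc y⁻¹ = 2 ^ ((n : ℝ) / 2) * (y ^ (n - 1) * (2 ^ ((n : ℝ) / 2) * y ^ n)⁻¹) := by
        rw [← pow_sub_one_mul hn]
        field_simp
    _ ≤ 2 ^ ((n : ℝ) / 2) * (y ^ (n - 1) * (1 + y ^ 2) ^ (-(n : ℝ) / 2)) := by
        rw [neg_div, Real.rpow_neg (by positivity)]
        gcongr
    _ ≤ 2 ^ ((n : ℝ) / 2) * (y ^ (n - 1) * (1 + y ^ 2) ^ (-r / 2)) := by gcongr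

section

variable {E : Type*} [NormedAddCommGroup E] [NormedSpace ℝ E] [FiniteDimensional ℝ E]
  [MeasurableSpace E] [BorelSpace E] [Nontrivial E] (μ : Measure E) [μ.IsAddHaarMeasure]

theorem integrable_rpow_neg_one_add_norm_sq_iff {r : ℝ} :
    Integrable (fun x : E ↦ (1 + ‖x‖ ^ 2) ^ (-r / 2)) μ ↔ (Module.finrank ℝ E : ℝ) < r := by
  refine ⟨fun h ↦ ?_, integrable_rpow_neg_one_add_norm_sq⟩
  by_contra! hr
  have h_radial :=
    (integrable_fun_norm_addHaar μ (f := fun y : ℝ ↦ (1 + y ^ 2) ^ (-r / 2))).1 h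
  refine not_integrableOn_Ioi_inv (a := (1 : ℝ)) <|
    ((h_radial.mono_set (Set.Ioi_subset_Ioi zero_le_one)).const_mul
      (2 ^ ((Module.finrank ℝ E : ℝ) / 2))).mono' measurable_inv.aestronglyMeasurable ?_
  filter_upwards [ae_restrict_mem measurableSet_Ioi] with y (hy : 1 < y)
  rw [Real.norm_of_nonneg (inv_nonneg.2 (by linarith))]
  exact inv_le_two_rpow_mul_pow_mul_one_add_sq_rpow Module.finrank_pos.ne' hr hy.le

theorem memLp_two_iff_of_norm_eq_sqrt_one_add_norm_sq_rpow {F : Type*} [NormedAddCommGroup F]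
    {f : E → F} (hf : AEStronglyMeasurable f μ) {t : ℝ}
    (hf_norm : ∀ x, ‖f x‖ = √(1 + ‖x‖ ^ 2) ^ (-t)) :
    MemLp f 2 μ ↔ (Module.finrank ℝ E : ℝ) < 2 * t := by
  rw [memLp_two_iff_integrable_sq_norm hf, ← integrable_rpow_neg_one_add_norm_sq_iff μ]
  refine integrable_congr (.of_forall fun x ↦ ?_)
  have ha : 0 ≤ 1 + ‖x‖ ^ 2 := by positivity
  dsimp only
  rw [hf_norm, Real.sqrt_eq_rpow, ← Real.rpow_mul ha, ← Real.rpow_mul_natCast ha]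
  ring_nf

end

/-- ψ(x) = ⟨x⟩⁻²(I₂ + iσ·x)φ₀ is not in L²(ℝ²;ℂ²), but ⟨x⟩⁻ˢψ ∈ L² for every s > 0. -/
theorem stmt3 (φ₀ : C2) (hφ : ‖φ₀‖ = 1)
    (ψ : R2 → C2)
    (hψ : ∀ x, ψ x =
      ((Real.sqrt (1 + ‖x‖ ^ 2) : ℂ)) ⁻¹ ^ 2 • mulVecE (1 + I • sigmaDot x) φ₀) :
    ¬ MeasureTheory.MemLp ψ 2 MeasureTheory.volume ∧
    ∀ s : ℝ, 0 < s →
      MeasureTheory.MemLp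
        (fun x => ((Real.sqrt (1 + ‖x‖ ^ 2) ^ (-s) : ℝ) : ℂ) • ψ x) 2
        MeasureTheory.volume := by
  have h_bracket_pos (x : R2) : 0 < √(1 + ‖x‖ ^ 2) := by positivity
  have h_bracket_cont : Continuous fun x : R2 ↦ √(1 + ‖x‖ ^ 2) := by fun_prop
  have hψ_cont : Continuous ψ := by
    have h_scalar : Continuous fun x : R2 ↦ ((√(1 + ‖x‖ ^ 2) : ℂ))⁻¹ ^ 2 :=
      ((continuous_ofReal.comp h_bracket_cont).inv₀
        fun x ↦ ofReal_ne_zero.2 (h_bracket_pos x).ne').pow 2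
    have h_vec : Continuous fun x : R2 ↦ mulVecE (1 + I • sigmaDot x) φ₀ :=
      (continuous_const.add (continuous_sigmaDot.const_smul I)).mulVecE φ₀
    rw [funext hψ]
    exact h_scalar.smul h_vec
  have hψ_norm (x : R2) : ‖ψ x‖ = √(1 + ‖x‖ ^ 2) ^ (-1 : ℝ) := by
    rw [hψ, norm_smul, norm_mulVecE_one_add_I_smul_sigmaDot, hφ, norm_pow, norm_inv, norm_real,
      Real.norm_of_nonneg (h_bracket_pos x).le, Real.rpow_neg_one]
    field_simp
  have h_dim : (Module.finrank ℝ R2 : ℝ) = 2 := by simp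
  refine ⟨?_, fun s hs ↦ ?_⟩
  · rw [memLp_two_iff_of_norm_eq_sqrt_one_add_norm_sq_rpow volume hψ_cont.aestronglyMeasurable
      hψ_norm, h_dim]
    norm_num
  · have h_cont : Continuous fun x : R2 ↦ ((√(1 + ‖x‖ ^ 2) ^ (-s) : ℝ) : ℂ) :=
      continuous_ofReal.comp (h_bracket_cont.rpow_const fun x ↦ .inl (h_bracket_pos x).ne')
    refine (memLp_two_iff_of_norm_eq_sqrt_one_add_norm_sq_rpow (t := s + 1) volume
      (h_cont.smul hψ_cont).aestronglyMeasurable fun x ↦ ?_).2 (by rw [h_dim]; linarith)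
    rw [Pi.smul_apply', norm_smul, hψ_norm, norm_real, Real.norm_of_nonneg (by positivity),
      ← Real.rpow_add (h_bracket_pos x), neg_add]
end
end

section
/- Let η : ℝ → ℝ be continuous, k ∈ ℝ³ a unit vector, q(x) := η(x·k), ξ(t) := ∫₀ᵗ η(τ)dτ, and φ₀ ∈ ℂ⁴ a unit vector with (α·k)φ₀ = φ₀. Then for every λ ∈ ℝ the function f(x) = exp(-i(α·k)ξ(x·k)) exp(iλ x·k) φ₀ is C¹, satisfies |f(x)| = 1 for all x, and solves (-i α·∇ + q) f = λ f pointwise on ℝ³. -/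
/-!
Because `(α·k) φ₀ = φ₀`, the matrix exponential acts on `φ₀` as the scalar `e^{-iξ}`, so
`f x = g (k·x) • φ₀` with the unimodular phase `g t = exp (i (λ t - ξ t))`, and `g' = i (λ - η) g`
by the fundamental theorem of calculus. Thus `∂ⱼ f = kⱼ g' φ₀`, and
`-i α·∇ f = -i g' (α·k) φ₀ = (λ - η) g φ₀ = (λ - q) f`.
-/

open Matrix Complex MeasureTheory Filter
open scoped RealInnerProductSpace Matrix.Norms.L2Operator

noncomputable section

theorem ContinuousLinearMap.exp_apply_of_apply_eq_smul {𝕂 E : Type*} [RCLike 𝕂]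
    [NormedAddCommGroup E] [NormedSpace 𝕂 E] [CompleteSpace E]
    {T : E →L[𝕂] E} {c : 𝕂} {v : E} (h : T v = c • v) :
    NormedSpace.exp T v = NormedSpace.exp c • v := by
  have hpow (n : ℕ) : (T ^ n) v = c ^ n • v := by
    induction n with
    | zero => simp
    | succ n ih => rw [pow_succ', mul_apply_eq_comp, ih, map_smul, h, smul_smul, pow_succ]
  have hT := (NormedSpace.exp_series_hasSum_exp' (𝕂 := 𝕂) T).mapL (apply 𝕂 E v)
  have hc := (NormedSpace.exp_series_hasSum_exp' (𝕂 := 𝕂) c).smul_const v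
  simp only [apply_apply, _root_.smul_apply, hpow, smul_smul] at hT hc
  exact hT.unique hc

theorem HasDerivAt.hasFDerivAt_comp_smul_const {E F : Type*} [NormedAddCommGroup E]
    [NormedSpace ℝ E] [NormedAddCommGroup F] [NormedSpace ℂ F] {g : ℝ → ℂ} {g' : ℂ}
    (ℓ : E →L[ℝ] ℝ) (v : F) {x : E} (hg : HasDerivAt g g' (ℓ x)) :
    HasFDerivAt (fun y => g (ℓ y) • v) (ℓ.smulRight (g' • v)) x :=
  ((hg.smul_const v).hasFDerivAt.comp x ℓ.hasFDerivAt).congr_fderiv (by ext; simp)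

theorem contDiff_one_of_hasDerivAt {𝕜 F : Type*} [NontriviallyNormedField 𝕜]
    [NormedAddCommGroup F] [NormedSpace 𝕜 F] {f f' : 𝕜 → F} (hf : ∀ t, HasDerivAt f (f' t) t)
    (hf' : Continuous f') : ContDiff 𝕜 1 f :=
  contDiff_one_iff_deriv.2 ⟨fun t => (hf t).differentiableAt, by rwa [funext fun t => (hf t).deriv]⟩

section mulVecE

variable {n : ℕ}

theorem mulVecE_eq_toEuclideanCLM (M : Matrix (Fin n) (Fin n) ℂ) (v : EuclideanSpace ℂ (Fin n)) :
    mulVecE M v = toEuclideanCLM (n := Fin n) (𝕜 := ℂ) M v :=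
  rfl

theorem mulVecE_smul_left_s6 (c : ℂ) (M : Matrix (Fin n) (Fin n) ℂ) (v : EuclideanSpace ℂ (Fin n)) :
    mulVecE (c • M) v = c • mulVecE M v := by
  simp only [mulVecE_eq_toEuclideanCLM, map_smul, FunLike.coe_smul, Pi.smul_apply]

theorem mulVecE_smul_right_s6 (c : ℂ) (M : Matrix (Fin n) (Fin n) ℂ)
    (v : EuclideanSpace ℂ (Fin n)) : mulVecE M (c • v) = c • mulVecE M v := by
  simp only [mulVecE_eq_toEuclideanCLM, map_smul]

theorem mulVecE_exp_of_mulVecE_eq_smul {M : Matrix (Fin n) (Fin n) ℂ} {c : ℂ}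
    {v : EuclideanSpace ℂ (Fin n)} (h : mulVecE M v = c • v) :
    mulVecE (NormedSpace.exp M) v = Complex.exp c • v := by
  have hcont : Continuous (toEuclideanCLM (n := Fin n) (𝕜 := ℂ)) :=
    (toEuclideanCLM (n := Fin n) (𝕜 := ℂ)).toAlgEquiv.toLinearMap.continuous_of_finiteDimensional
  rw [mulVecE_eq_toEuclideanCLM, NormedSpace.map_exp_of_mem_ball (𝕂 := ℂ) _ hcont _
    (by simp [NormedSpace.expSeries_radius_eq_top]), Complex.exp_eq_exp_ℂ]
  exact ContinuousLinearMap.exp_apply_of_apply_eq_smul h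

theorem mulVecE_exp_smul_of_mulVecE_eq_self {M : Matrix (Fin n) (Fin n) ℂ}
    {v : EuclideanSpace ℂ (Fin n)} (h : mulVecE M v = v) (c : ℂ) :
    mulVecE (NormedSpace.exp (c • M)) v = Complex.exp c • v :=
  mulVecE_exp_of_mulVecE_eq_smul (by rw [mulVecE_smul_left_s6, h])

end mulVecE

theorem diracOp_eq_of_hasFDerivAt {f : R3 → C4} {x k : R3} {w : C4}
    (hf : HasFDerivAt f ((innerSL ℝ k).smulRight w) x) :
    diracOp f x = (-I) • mulVecE (alphaDot k) w := by
  simp only [diracOp, hf.fderiv, ContinuousLinearMap.smulRight_apply, innerSL_apply_apply,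
    EuclideanSpace.inner_single_right, one_mul, conj_trivial, ← Complex.coe_smul,
    mulVecE_eq_toEuclideanCLM, alphaDot, map_sum, map_smul, FunLike.coe_sum, Finset.sum_apply,
    FunLike.coe_smul, Pi.smul_apply]

theorem diracOp_smul_of_hasDerivAt {g : ℝ → ℂ} {g' : ℂ} {k x : R3} {φ : C4}
    (hg : HasDerivAt g g' ⟪k, x⟫) (hφ : mulVecE (alphaDot k) φ = φ) :
    diracOp (fun y => g ⟪k, y⟫ • φ) x = (-I * g') • φ := by
  rw [diracOp_eq_of_hasFDerivAt (f := fun y => g ⟪k, y⟫ • φ)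
      (hg.hasFDerivAt_comp_smul_const (innerSL ℝ k) φ),
    mulVecE_smul_right_s6, hφ, smul_smul]

theorem stmt6_general (η : ℝ → ℝ) (hη : Continuous η) (k : R3)
    (q : R3 → ℝ) (hq : ∀ x, q x = η ⟪x, k⟫)
    (ξ : ℝ → ℝ) (hξ : ∀ t, ξ t = ∫ τ in (0:ℝ)..t, η τ)
    (φ₀ : C4) (hφ : ‖φ₀‖ = 1) (hφk : mulVecE (alphaDot k) φ₀ = φ₀)
    (lam : ℝ) (f : R3 → C4)
    (hf : ∀ x, f x = mulVecE (NormedSpace.exp ((-(I * (ξ ⟪x, k⟫ : ℝ))) • alphaDot k))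
        (Complex.exp (I * lam * (⟪x, k⟫ : ℝ)) • φ₀)) :
    ContDiff ℝ 1 f ∧ (∀ x, ‖f x‖ = 1) ∧
      ∀ x, diracOp f x + (q x : ℂ) • f x = (lam : ℂ) • f x := by
  simp_rw [real_inner_comm k] at hq hf
  have hξ_deriv (t : ℝ) : HasDerivAt ξ (η t) t := by
    rw [funext hξ]
    exact (hη.integral_hasStrictDerivAt 0 t).hasDerivAt
  set g : ℝ → ℂ := fun t => Complex.exp (↑(t * lam - ξ t) * I) with hg_def
  have hg_deriv (t : ℝ) : HasDerivAt g (g t * (↑(lam - η t) * I)) t :=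
    (((hasDerivAt_mul_const lam).sub (hξ_deriv t)).ofReal_comp.mul_const I).cexp
  have hg_cont : Continuous g := continuous_iff_continuousAt.2 fun t => (hg_deriv t).continuousAt
  have hf_eq : f = fun x => g ⟪k, x⟫ • φ₀ := by
    ext1 x
    rw [hf x, mulVecE_smul_right_s6, mulVecE_exp_smul_of_mulVecE_eq_self hφk, smul_smul,
      ← Complex.exp_add, hg_def]
    congr 2
    push_cast
    ring
  refine ⟨?_, fun x => ?_, fun x => ?_⟩
  · rw [hf_eq]
    exact ((contDiff_one_of_hasDerivAt hg_deriv (by fun_prop)).comp (innerSL ℝ k).contDiff).smul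
      contDiff_const
  · rw [hf_eq, norm_smul, hg_def, Complex.norm_exp_ofReal_mul_I, hφ, one_mul]
  · rw [hf_eq, diracOp_smul_of_hasDerivAt (hg_deriv _) hφk, hq x]
    simp only [smul_smul, ← add_smul]
    congr 1
    push_cast
    linear_combination -(g ⟪k, x⟫ * (lam - η ⟪k, x⟫)) * I_mul_I

/-- Bounded generalized eigenfunctions for the massless Dirac operator with potential
q(x) = η(x·k): the plane-wave ansatz f(x) = exp(-i(α·k)ξ(x·k)) e^{iλx·k} φ₀ is C¹, has
pointwise norm one, and satisfies (-iα·∇ + q)f = λf on ℝ³. -/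
theorem stmt6 (η : ℝ → ℝ) (hη : Continuous η) (k : R3) (hk : ‖k‖ = 1)
    (q : R3 → ℝ) (hq : ∀ x, q x = η ⟪x, k⟫)
    (ξ : ℝ → ℝ) (hξ : ∀ t, ξ t = ∫ τ in (0:ℝ)..t, η τ)
    (φ₀ : C4) (hφ : ‖φ₀‖ = 1) (hφk : mulVecE (alphaDot k) φ₀ = φ₀)
    (lam : ℝ) (f : R3 → C4)
    (hf : ∀ x, f x = mulVecE (NormedSpace.exp ((-(I * (ξ ⟪x, k⟫ : ℝ))) • alphaDot k))
        (Complex.exp (I * lam * (⟪x, k⟫ : ℝ)) • φ₀)) :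
    ContDiff ℝ 1 f ∧ (∀ x, ‖f x‖ = 1) ∧
      ∀ x, diracOp f x + (q x : ℂ) • f x = (lam : ℂ) • f x :=
  stmt6_general η hη k q hq ξ hξ φ₀ hφ hφk lam f hf
end
end

section
/- Let M : ℕ → ℝ be monotonically increasing with M(n) > 0 for all n, and suppose M is polynomially bounded along powers of 4: there exist constants C > 0, N ∈ ℕ, and ν₀ ∈ ℕ, ν₀ ≥ 1, such that M(4^ℓ ν₀) ≤ C · 4^{(2N+3)ℓ} for all ℓ ∈ ℕ. Then liminf_{n→∞} (M(2n) − M(n)) / (n² M(n)) = 0. -/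
/-!
If the ratio stayed above some ε > 0 from some point on, then M(2n) ≥ ε n² M(n) for all large n.
Starting from a ν = 4^L ν₀ with ε ν² ≥ 1, the two doublings from 4^ℓ ν to 4^(ℓ+1) ν gain a factor
at least ε (2 · 4^ℓ ν)² ≥ 4^(2ℓ+1), so M(4^ℓ ν) ≥ 4^(ℓ²) M(ν). This growth along powers of 4 is
faster than the polynomial bound C · 4^((2N+3)ℓ).
-/

open Filter

theorem liminf_eq_zero_of_nonneg_of_frequently_lt {α : Type*} {l : Filter α} [l.NeBot]
    {f : α → ℝ} (hf : ∀ a, 0 ≤ f a) (h : ∀ ε > 0, ∃ᶠ a in l, f a < ε) : liminf f l = 0 := by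
  have hbdd : l.IsBoundedUnder (· ≥ ·) f := isBoundedUnder_of_eventually_ge (.of_forall hf)
  have hcobdd : l.IsCoboundedUnder (· ≥ ·) f := ⟨1, fun a ha => by
    obtain ⟨x, hax, hx⟩ := ((eventually_map.1 ha).and_frequently (h 1 one_pos)).exists
    exact hax.le.trans hx.le⟩
  refine le_antisymm (le_of_forall_pos_le_add fun ε hε => ?_)
    (le_liminf_of_le hcobdd (.of_forall hf))
  rw [zero_add]
  exact liminf_le_of_frequently_le ((h ε hε).mono fun _ => le_of_lt) hbdd

theorem exists_mul_pow_lt_pow_sq_mul {b : ℝ} (hb : 1 < b) {c : ℝ} (hc : 0 < c) (C : ℝ)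
    (a L : ℕ) : ∃ ℓ : ℕ, C * b ^ (a * (ℓ + L)) < b ^ (ℓ ^ 2) * c := by
  obtain ⟨K, hK⟩ := pow_unbounded_of_one_lt (C / c) hb
  refine ⟨a + L + K + 1, ?_⟩
  have hexp : a * (a + L + K + 1 + L) + K ≤ (a + L + K + 1) ^ 2 := by nlinarith
  calc C * b ^ (a * (a + L + K + 1 + L))
      < c * b ^ K * b ^ (a * (a + L + K + 1 + L)) := by
        gcongr; exact (div_lt_iff₀' hc).1 hK
    _ = b ^ (a * (a + L + K + 1 + L) + K) * c := by ring
    _ ≤ b ^ ((a + L + K + 1) ^ 2) * c := by gcongr; exact hb.le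

theorem four_pow_sq_mul_le_of_quadratic_doubling {M : ℕ → ℝ} (hmono : Monotone M)
    (hM : ∀ n, 0 ≤ M n) {ε : ℝ} {ν : ℕ} (hεν : 1 ≤ ε * ν ^ 2)
    (hstep : ∀ n ≥ ν, ε * n ^ 2 * M n ≤ M (2 * n)) (ℓ : ℕ) :
    (4 : ℝ) ^ (ℓ ^ 2) * M ν ≤ M (4 ^ ℓ * ν) := by
  induction ℓ with
  | zero => simp
  | succ ℓ ih =>
    set n := 4 ^ ℓ * ν
    have hνn : ν ≤ n := Nat.le_mul_of_pos_left ν (by positivity)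
    have hcoeff : (4 : ℝ) ^ (2 * ℓ + 1) ≤ ε * ((2 * n : ℕ) : ℝ) ^ 2 := by
      have : ε * ((2 * n : ℕ) : ℝ) ^ 2 = 4 ^ (2 * ℓ + 1) * (ε * ν ^ 2) := by
        simp only [n]; push_cast; ring
      rw [this]
      exact le_mul_of_one_le_right (by positivity) hεν
    calc (4 : ℝ) ^ ((ℓ + 1) ^ 2) * M ν = 4 ^ (2 * ℓ + 1) * (4 ^ (ℓ ^ 2) * M ν) := by ring
      _ ≤ 4 ^ (2 * ℓ + 1) * M (2 * n) := by
        gcongr; exact ih.trans (hmono (by omega))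
      _ ≤ ε * ((2 * n : ℕ) : ℝ) ^ 2 * M (2 * n) := by gcongr; exact hM _
      _ ≤ M (2 * (2 * n)) := hstep _ (by omega)
      _ = M (4 ^ (ℓ + 1) * ν) := by congr 1; simp only [n]; ring

theorem frequently_doubling_ratio_lt {M : ℕ → ℝ} (hmono : Monotone M) (hpos : ∀ n, 0 < M n)
    {C : ℝ} {a ν₀ : ℕ} (hν : 1 ≤ ν₀) (hbound : ∀ ℓ : ℕ, M (4 ^ ℓ * ν₀) ≤ C * 4 ^ (a * ℓ)) {ε : ℝ}
    (hε : 0 < ε) : ∃ᶠ n in atTop, (M (2 * n) - M n) / ((n : ℝ) ^ 2 * M n) < ε := by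
  simp only [Filter.Frequently, not_lt, eventually_atTop]
  rintro ⟨m, hm⟩
  have hscale : Tendsto (fun L : ℕ => 4 ^ L * ν₀) atTop atTop :=
    tendsto_atTop_mono (fun L => Nat.le_mul_of_pos_right _ hν)
      (tendsto_pow_atTop_atTop_of_one_lt (by norm_num))
  have hsq : Tendsto (fun n : ℕ => ε * (n : ℝ) ^ 2) atTop atTop :=
    ((tendsto_pow_atTop two_ne_zero).comp tendsto_natCast_atTop_atTop).const_mul_atTop hε
  obtain ⟨L, hLm, hLε⟩ :=
    ((hscale.eventually_ge_atTop (max m 1)).and ((hsq.comp hscale).eventually_ge_atTop 1)).exists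
  set ν := 4 ^ L * ν₀
  have hstep : ∀ n ≥ ν, ε * n ^ 2 * M n ≤ M (2 * n) := by
    intro n hn
    have hMn := hpos n
    have hden : 0 < (n : ℝ) ^ 2 * M n := by
      have : 0 < n := (le_max_right m 1).trans (hLm.trans hn)
      positivity
    have := (le_div_iff₀ hden).1 (hm n ((le_max_left m 1).trans (hLm.trans hn)))
    linarith
  obtain ⟨ℓ, hℓ⟩ := exists_mul_pow_lt_pow_sq_mul (by norm_num : (1 : ℝ) < 4) (hpos ν) C a L
  have hgrowth := four_pow_sq_mul_le_of_quadratic_doubling hmono (fun n => (hpos n).le) hLε hstep ℓ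
  have hbound' : M (4 ^ ℓ * ν) ≤ C * 4 ^ (a * (ℓ + L)) := by
    simpa only [ν, ← mul_assoc, ← pow_add] using hbound (ℓ + L)
  linarith

theorem stmt7_general (M : ℕ → ℝ) (hmono : Monotone M) (hpos : ∀ n, 0 < M n)
    (C : ℝ) (N ν₀ : ℕ) (hν : 1 ≤ ν₀)
    (hbound : ∀ ℓ : ℕ, M (4 ^ ℓ * ν₀) ≤ C * 4 ^ ((2 * N + 3) * ℓ)) :
    Filter.liminf (fun n : ℕ => (M (2 * n) - M n) / ((n : ℝ) ^ 2 * M n)) Filter.atTop = 0 := by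
  refine liminf_eq_zero_of_nonneg_of_frequently_lt (fun n => ?_)
    fun ε hε => frequently_doubling_ratio_lt hmono hpos hν hbound hε
  exact div_nonneg (sub_nonneg.2 (hmono (by omega))) (mul_nonneg (sq_nonneg _) (hpos n).le)

/-- If M : ℕ → ℝ is positive, monotone, and polynomially bounded along powers of 4, then
liminf (M(2n) - M(n))/(n² M(n)) = 0. -/
theorem stmt7 (M : ℕ → ℝ) (hmono : Monotone M) (hpos : ∀ n, 0 < M n)
    (C : ℝ) (hC : 0 < C) (N ν₀ : ℕ) (hν : 1 ≤ ν₀)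
    (hbound : ∀ ℓ : ℕ, M (4 ^ ℓ * ν₀) ≤ C * 4 ^ ((2 * N + 3) * ℓ)) :
    Filter.liminf (fun n : ℕ => (M (2 * n) - M n) / ((n : ℝ) ^ 2 * M n)) Filter.atTop = 0 :=
  stmt7_general M hmono hpos C N ν₀ hν hbound
end

section
/- Let U(a), a > 0, be a one-parameter family of unitary operators on a Hilbert space ℋ converging strongly to the identity as a → 1, let T be self-adjoint in ℋ, and set T_a := a U(a) T U(a)⁻¹. If f ∈ Dom(T) ∩ Dom(T_a) is an eigenvector of T with eigenvalue λ, then lim_{a→1} ⟨U(a)f, (T_a − T)/(a−1) · f⟩ = λ ‖f‖². -/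
/-!
For a symmetric `T` the eigenvalue `λ` of `f` is real, so `⟪f, T g⟫ = λ ⟪f, g⟫` for every `g` in
the domain. Taking `g = U(a)⁻¹ f` and using unitarity, `⟪U(a) f, T_a f⟫ = a λ ⟪U(a) f, f⟫`, while
`⟪U(a) f, T f⟫ = λ ⟪U(a) f, f⟫`. The difference quotient is therefore exactly `λ ⟪U(a) f, f⟫`,
which tends to `λ ‖f‖²` by strong continuity of `U`.
-/

open scoped InnerProductSpace ComplexConjugate

open Filter Topology

namespace LinearPMap

variable {𝕜 E : Type*} [RCLike 𝕜] [NormedAddCommGroup E] [InnerProductSpace 𝕜 E]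

theorem _root_.IsSelfAdjoint.isFormalAdjoint_self [CompleteSpace E] {A : E →ₗ.[𝕜] E}
    (hA : IsSelfAdjoint A) : A.IsFormalAdjoint A := by
  have h := adjoint_isFormalAdjoint hA.dense_domain
  rwa [isSelfAdjoint_def.1 hA] at h

namespace IsFormalAdjoint

variable {A : E →ₗ.[𝕜] E} (hA : A.IsFormalAdjoint A) {μ : 𝕜} {x : E} {hx : x ∈ A.domain}
  (hμ : A ⟨x, hx⟩ = μ • x)
include hA hμ

theorem conj_smul_eq_smul_of_apply_eq_smul : conj μ • x = μ • x := by
  rcases eq_or_ne x 0 with rfl | hx0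
  · simp
  have h := hA ⟨x, hx⟩ ⟨x, hx⟩
  rw [hμ, inner_smul_left, inner_smul_right] at h
  rw [mul_right_cancel₀ (inner_self_ne_zero.2 hx0) h]

theorem inner_apply_eq_mul_inner_of_apply_eq_smul (y : A.domain) :
    ⟪x, (A y : E)⟫_𝕜 = μ * ⟪x, (y : E)⟫_𝕜 := by
  rw [← hA ⟨x, hx⟩ y, hμ, ← hA.conj_smul_eq_smul_of_apply_eq_smul hμ, inner_smul_left,
    RCLike.conj_conj]

theorem inner_map_apply_symm_of_apply_eq_smul (V : E ≃ₗᵢ[𝕜] E) (hV : V.symm x ∈ A.domain) :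
    ⟪V x, V (A ⟨V.symm x, hV⟩)⟫_𝕜 = μ * ⟪V x, x⟫_𝕜 := by
  rw [V.inner_map_map, hA.inner_apply_eq_mul_inner_of_apply_eq_smul hμ, V.inner_map_eq_flip]

end IsFormalAdjoint

end LinearPMap

/-- The abstract virial theorem of Balinsky and Evans: for a family of unitaries U(a) converging
strongly to the identity as a → 1, a self-adjoint operator T, and an eigenvector f of T with
eigenvalue λ such that f ∈ Dom(T) ∩ Dom(T_a) where T_a = aU(a)TU(a)⁻¹, one has
lim_{a→1} ⟨U(a)f, (T_a - T)/(a-1) f⟩ = λ‖f‖². -/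
theorem stmt11 {ℋ : Type*} [NormedAddCommGroup ℋ] [InnerProductSpace ℂ ℋ] [CompleteSpace ℋ]
    (U : ℝ → (ℋ ≃ₗᵢ[ℂ] ℋ))
    (hU : ∀ x : ℋ, Filter.Tendsto (fun a : ℝ => U a x) (nhds 1) (nhds x))
    (T : ℋ →ₗ.[ℂ] ℋ) (hsa : IsSelfAdjoint T)
    (f : ℋ) (hf : f ∈ T.domain) (hfa : ∀ a : ℝ, ((U a).symm f) ∈ T.domain)
    (lam : ℂ) (heig : T ⟨f, hf⟩ = lam • f) :
    Filter.Tendsto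
      (fun a : ℝ =>
        ⟪U a f, (((a : ℂ) - 1))⁻¹ •
          ((a : ℂ) • (U a (T ⟨(U a).symm f, hfa a⟩)) - T ⟨f, hf⟩)⟫_ℂ)
      (nhdsWithin 1 {(1 : ℝ)}ᶜ) (nhds (lam * ((‖f‖ : ℝ) ^ 2 : ℝ))) := by
  have hquot : ∀ a : ℝ, a ≠ 1 →
      ⟪U a f, (((a : ℂ) - 1))⁻¹ •
          ((a : ℂ) • (U a (T ⟨(U a).symm f, hfa a⟩)) - T ⟨f, hf⟩)⟫_ℂ = lam * ⟪U a f, f⟫_ℂ := by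
    intro a ha
    have ha' : (a : ℂ) - 1 ≠ 0 := sub_ne_zero.2 (by exact_mod_cast ha)
    rw [inner_smul_right, inner_sub_right, inner_smul_right,
      hsa.isFormalAdjoint_self.inner_map_apply_symm_of_apply_eq_smul heig, heig, inner_smul_right]
    field_simp
  have hlim : Tendsto (fun a : ℝ => lam * ⟪U a f, f⟫_ℂ) (𝓝 1) (𝓝 (lam * ((‖f‖ : ℝ) ^ 2 : ℝ))) := by
    convert ((hU f).inner tendsto_const_nhds).const_mul lam using 3
    exact_mod_cast (inner_self_eq_norm_sq_to_K (𝕜 := ℂ) f).symm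
  exact (hlim.mono_left nhdsWithin_le_nhds).congr' <|
    eventually_nhdsWithin_of_forall fun a ha => (hquot a ha).symm
end

section
/- Let (Eⱼ) be a sequence of invertible 2×2 complex matrices with uniform bounds |Eⱼ| ≤ C, |Eⱼ⁻¹| ≤ C, and suppose Σⱼ |Eⱼ − Eⱼ₋₁| < ∞. Then the products Pₙ := Eₙ Dₙ Eₙ⁻¹ Eₙ₋₁ Dₙ₋₁ Eₙ₋₁⁻¹ ⋯ E_J D_J E_J⁻¹, where each Dⱼ is a diagonal unitary matrix, are uniformly bounded in operator norm: |Pₙ| ≤ C² exp(C Σⱼ |Eⱼ − Eⱼ₋₁|) for all n ≥ J. -/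
open Matrix Complex
open scoped Matrix.Norms.L2Operator

noncomputable section

/-!
Write `Pₙ = Eₙ Dₙ Eₙ⁻¹ ⋯ E_J D_J E_J⁻¹`. Regrouping the factors gives
`Pₙ = Eₙ · Dₙ (Eₙ⁻¹Eₙ₋₁) Dₙ₋₁ (Eₙ₋₁⁻¹Eₙ₋₂) ⋯ (E_{J+1}⁻¹E_J) D_J · E_J⁻¹`.
The `Dⱼ` are unitary, so they have norm one, the outer factors contribute `C²`, and each
`Eⱼ₊₁⁻¹Eⱼ = 1 - Eⱼ₊₁⁻¹(Eⱼ₊₁ - Eⱼ)` has norm at most `1 + C|Eⱼ₊₁ - Eⱼ| ≤ exp (C|Eⱼ₊₁ - Eⱼ|)`.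
-/

theorem List.prod_map_range_sub_succ {M : Type*} [Monoid M] (F : ℕ → M) {J n : ℕ}
    (h : J ≤ n) :
    ((List.range (n + 1 - J + 1)).map fun i => F (n + 1 - i)).prod =
      F (n + 1) * ((List.range (n - J + 1)).map fun i => F (n - i)).prod := by
  rw [show n + 1 - J + 1 = n - J + 1 + 1 by omega, List.range_succ_eq_map]
  simp only [List.map_cons, List.map_map, List.prod_cons, Nat.sub_zero]
  congr 2
  refine List.map_congr_left fun i _ => ?_
  simp only [Function.comp_apply, Nat.succ_eq_add_one, Nat.add_sub_add_right]

section Monoid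

variable {M : Type*} [Monoid M]

/-- For `n < J` the truncated subtraction leaves the single factor `Eₙ Dₙ Eₙ⁻¹`. -/
def conjProd (E : ℕ → Mˣ) (D : ℕ → M) (J n : ℕ) : M :=
  ((List.range (n - J + 1)).map fun i => E (n - i) * D (n - i) * ↑(E (n - i))⁻¹).prod

theorem conjProd_self (E : ℕ → Mˣ) (D : ℕ → M) (J : ℕ) :
    conjProd E D J J = E J * D J * ↑(E J)⁻¹ := by
  simp [conjProd]

theorem conjProd_succ (E : ℕ → Mˣ) (D : ℕ → M) {J n : ℕ} (h : J ≤ n) :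
    conjProd E D J (n + 1) = E (n + 1) * D (n + 1) * ↑(E (n + 1))⁻¹ * conjProd E D J n :=
  List.prod_map_range_sub_succ (fun k => E k * D k * ((E k)⁻¹ : Mˣ)) h

end Monoid

section NormedRing

variable {R : Type*} [NormedRing R] [NormOneClass R]

theorem Units.norm_inv_mul_le_exp (a b : Rˣ) :
    ‖(↑a⁻¹ * b : R)‖ ≤ Real.exp (‖(↑a⁻¹ : R)‖ * ‖(a - b : R)‖) :=
  calc ‖(↑a⁻¹ * b : R)‖ = ‖1 - ↑a⁻¹ * (a - b : R)‖ := by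
        rw [mul_sub, Units.inv_mul, sub_sub_cancel]
    _ ≤ 1 + ‖(↑a⁻¹ : R)‖ * ‖(a - b : R)‖ := by
        grw [norm_sub_le, norm_one, norm_mul_le]
    _ ≤ Real.exp (‖(↑a⁻¹ : R)‖ * ‖(a - b : R)‖) := by
        rw [add_comm]; exact Real.add_one_le_exp _

variable (E : ℕ → Rˣ) (D : ℕ → R) {C : ℝ}

theorem norm_inv_mul_conjProd_le (hEinv : ∀ j, ‖(↑(E j)⁻¹ : R)‖ ≤ C) (hD : ∀ j, ‖D j‖ ≤ 1)
    {J n : ℕ} (hn : J ≤ n) :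
    ‖↑(E n)⁻¹ * conjProd E D J n‖ ≤
      C * Real.exp (C * ∑ j ∈ Finset.Ico J n, ‖(E (j + 1) - E j : R)‖) := by
  induction n, hn using Nat.le_induction with
  | base =>
    rw [conjProd_self, mul_assoc, Units.inv_mul_cancel_left, Finset.Ico_self,
      Finset.sum_empty, mul_zero, Real.exp_zero, mul_one]
    calc ‖D J * ↑(E J)⁻¹‖ ≤ 1 * ‖(↑(E J)⁻¹ : R)‖ := by grw [norm_mul_le, hD J]
      _ ≤ C := by rw [one_mul]; exact hEinv J
  | succ n hn ih =>
    have hsplit : ↑(E (n + 1))⁻¹ * conjProd E D J (n + 1) =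
        D (n + 1) * ((↑(E (n + 1))⁻¹ * E n) * (↑(E n)⁻¹ * conjProd E D J n)) := by
      rw [conjProd_succ E D hn, mul_assoc (↑(E (n + 1))⁻¹ : R) (E n),
        Units.mul_inv_cancel_left]
      simp only [mul_assoc, Units.inv_mul_cancel_left]
    have hstep := (E (n + 1)).norm_inv_mul_le_exp (E n)
    grw [hEinv (n + 1)] at hstep
    calc ‖↑(E (n + 1))⁻¹ * conjProd E D J (n + 1)‖
        ≤ 1 * (Real.exp (C * ‖(E (n + 1) - E n : R)‖) *
            (C * Real.exp (C * ∑ j ∈ Finset.Ico J n, ‖(E (j + 1) - E j : R)‖))) := by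
          rw [hsplit]
          grw [norm_mul_le, norm_mul_le, hD, hstep, ih]
      _ = C * Real.exp (C * ∑ j ∈ Finset.Ico J (n + 1), ‖(E (j + 1) - E j : R)‖) := by
          rw [Finset.sum_Ico_succ_top hn, mul_add, Real.exp_add]
          ring

theorem norm_conjProd_le (hE : ∀ j, ‖(E j : R)‖ ≤ C) (hEinv : ∀ j, ‖(↑(E j)⁻¹ : R)‖ ≤ C)
    (hD : ∀ j, ‖D j‖ ≤ 1) {J n : ℕ} (hn : J ≤ n) :
    ‖conjProd E D J n‖ ≤
      C ^ 2 * Real.exp (C * ∑ j ∈ Finset.Ico J n, ‖(E (j + 1) - E j : R)‖) := by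
  have hC : 0 ≤ C := (norm_nonneg _).trans (hE 0)
  calc ‖conjProd E D J n‖ = ‖(E n : R) * (↑(E n)⁻¹ * conjProd E D J n)‖ := by
        rw [Units.mul_inv_cancel_left]
    _ ≤ C * (C * Real.exp (C * ∑ j ∈ Finset.Ico J n, ‖(E (j + 1) - E j : R)‖)) := by
        grw [norm_mul_le, hE n, norm_inv_mul_conjProd_le E D hEinv hD hn]
    _ = _ := by ring

end NormedRing

theorem stmt16_general (E : ℕ → Matrix (Fin 2) (Fin 2) ℂ) (D : ℕ → Matrix (Fin 2) (Fin 2) ℂ)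
    (hE : ∀ j, IsUnit (E j)) (C : ℝ)
    (hEb : ∀ j, ‖E j‖ ≤ C) (hEib : ∀ j, ‖(E j)⁻¹‖ ≤ C)
    (hD : ∀ j, D j ∈ Matrix.unitaryGroup (Fin 2) ℂ ∧ (D j).IsDiag)
    (hsum : Summable fun j => ‖E (j + 1) - E j‖) (J : ℕ)
    (P : ℕ → Matrix (Fin 2) (Fin 2) ℂ)
    (hP : ∀ n, P n =
      ((List.range (n - J + 1)).map fun i => E (n - i) * D (n - i) * (E (n - i))⁻¹).prod) :
    ∀ n, J ≤ n → ‖P n‖ ≤ C ^ 2 * Real.exp (C * ∑' j, ‖E (j + 1) - E j‖) := by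
  intro n hn
  choose U hU using hE
  obtain rfl : E = fun j => (U j : Matrix (Fin 2) (Fin 2) ℂ) := funext fun j => (hU j).symm
  simp only [← coe_units_inv] at hP hEib
  beta_reduce at hEb hsum ⊢
  have hDnorm (j : ℕ) : ‖D j‖ ≤ 1 :=
    (CStarRing.norm_coe_unitary ⟨D j, (hD j).1⟩).le
  have hC : 0 ≤ C := (norm_nonneg _).trans (hEb 0)
  rw [hP n, ← conjProd]
  grw [norm_conjProd_le U D hEb hEib hDnorm hn,
    hsum.sum_le_tsum (Finset.Ico J n) fun j _ => norm_nonneg _]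

/-- Stability estimate: products Pₙ = EₙDₙEₙ⁻¹ ⋯ E_J D_J E_J⁻¹ of conjugated diagonal
unitaries, with |Eⱼ|, |Eⱼ⁻¹| ≤ C and Σ|Eⱼ₊₁ - Eⱼ| < ∞, are uniformly bounded:
|Pₙ| ≤ C² exp(C Σⱼ |Eⱼ₊₁ - Eⱼ|). -/
theorem stmt16 (E : ℕ → Matrix (Fin 2) (Fin 2) ℂ) (D : ℕ → Matrix (Fin 2) (Fin 2) ℂ)
    (hE : ∀ j, IsUnit (E j)) (C : ℝ) (hC : 0 < C)
    (hEb : ∀ j, ‖E j‖ ≤ C) (hEib : ∀ j, ‖(E j)⁻¹‖ ≤ C)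
    (hD : ∀ j, D j ∈ Matrix.unitaryGroup (Fin 2) ℂ ∧ (D j).IsDiag)
    (hsum : Summable fun j => ‖E (j + 1) - E j‖) (J : ℕ)
    (P : ℕ → Matrix (Fin 2) (Fin 2) ℂ)
    (hP : ∀ n, P n =
      ((List.range (n - J + 1)).map fun i => E (n - i) * D (n - i) * (E (n - i))⁻¹).prod) :
    ∀ n, J ≤ n → ‖P n‖ ≤ C ^ 2 * Real.exp (C * ∑' j, ‖E (j + 1) - E j‖) :=
  stmt16_general E D hE C hEb hEib hD hsum J P hP
end
end

section
/- Let λ ∈ ℝ, k ∈ ℝ³ a unit vector, a ∈ ℝ³, r > 0, η̃ ∈ C^∞(−r,r), ξ(t) := ∫₀ᵗ η̃, and φ₀ ∈ ℂ⁴ a unit vector with (α·k)φ₀ = φ₀. Define F(x) := exp(−i(α·k)ξ((x−a)·k)) e^{iλ x·k} φ₀ on the ball B_r(a). Then |F(x)| = 1 on B_r(a) and (−iα·∇)F(x) = (λ − η̃((x−a)·k)) F(x) for all x ∈ B_r(a). -/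
open Matrix Complex MeasureTheory Filter
open scoped RealInnerProductSpace Matrix.Norms.L2Operator

noncomputable section

lemma mulVecE_smul {n : ℕ} (M : Matrix (Fin n) (Fin n) ℂ) (c : ℂ) (v : EuclideanSpace ℂ (Fin n)) :
    mulVecE M (c • v) = c • mulVecE M v := by
  simp [mulVecE, Matrix.mulVec_smul]

lemma mulVecE_add {n : ℕ} (M N : Matrix (Fin n) (Fin n) ℂ) (v : EuclideanSpace ℂ (Fin n)) :
    mulVecE (M + N) v = mulVecE M v + mulVecE N v := by
  simp [mulVecE, Matrix.add_mulVec]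

lemma mulVecE_msmul {n : ℕ} (M : Matrix (Fin n) (Fin n) ℂ) (c : ℂ) (v : EuclideanSpace ℂ (Fin n)) :
    mulVecE (c • M) v = c • mulVecE M v := by
  simp [mulVecE, Matrix.smul_mulVec]

lemma mulVecE_sum {n : ℕ} {ι : Type*} (s : Finset ι) (f : ι → Matrix (Fin n) (Fin n) ℂ)
    (v : EuclideanSpace ℂ (Fin n)) :
    mulVecE (∑ j ∈ s, f j) v = ∑ j ∈ s, mulVecE (f j) v := by
  classical
  induction s using Finset.induction with
  | empty => simp [mulVecE]
  | insert _ _ h ih => simp [Finset.sum_insert h, mulVecE_add, ih]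

theorem exp_eig (A : Matrix (Fin 4) (Fin 4) ℂ) (w : Fin 4 → ℂ) (hw : A.mulVec w = w) (c : ℂ) :
    (NormedSpace.exp (c • A)).mulVec w = Complex.exp c • w := by
  have hpow : ∀ n : ℕ, ((c • A) ^ n).mulVec w = c ^ n • w := by
    intro n
    induction n with
    | zero => simp [Matrix.one_mulVec]
    | succ n ih =>
      rw [pow_succ, ← Matrix.mulVec_mulVec, Matrix.smul_mulVec, hw, Matrix.mulVec_smul, ih,
        smul_smul, pow_succ, mul_comm]
  let L0 : Matrix (Fin 4) (Fin 4) ℂ →ₗ[ℂ] (Fin 4 → ℂ) :=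
    { toFun := fun M => M.mulVec w
      map_add' := fun M N => Matrix.add_mulVec M N w
      map_smul' := fun c M => Matrix.smul_mulVec c M w }
  let L := LinearMap.toContinuousLinearMap L0
  have hsum : Summable fun n : ℕ => (n.factorial : ℂ)⁻¹ • (c • A) ^ n :=
    NormedSpace.expSeries_summable' (𝕂 := ℂ) (c • A)
  have key : (NormedSpace.exp (c • A)).mulVec w
      = ∑' n : ℕ, (n.factorial : ℂ)⁻¹ • (c ^ n • w) := by
    rw [NormedSpace.exp_eq_tsum (𝕂 := ℂ)]
    have : L (∑' n : ℕ, (n.factorial : ℂ)⁻¹ • (c • A) ^ n)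
        = ∑' n : ℕ, L ((n.factorial : ℂ)⁻¹ • (c • A) ^ n) := L.map_tsum hsum
    simpa [L, L0, hpow] using this
  rw [key]
  have hsc : Summable fun n : ℕ => (n.factorial : ℂ)⁻¹ • c ^ n :=
    NormedSpace.expSeries_summable' (𝕂 := ℂ) c
  calc ∑' n : ℕ, (n.factorial : ℂ)⁻¹ • (c ^ n • w)
      = ∑' n : ℕ, ((n.factorial : ℂ)⁻¹ • c ^ n) • w := by simp [smul_smul]
    _ = (∑' n : ℕ, (n.factorial : ℂ)⁻¹ • c ^ n) • w := by rw [Summable.tsum_smul_const hsc]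
    _ = Complex.exp c • w := by
        congr 1
        rw [Complex.exp_eq_exp_ℂ, NormedSpace.exp_eq_tsum (𝕂 := ℂ)]

lemma mulVecE_exp_eig (A : Matrix (Fin 4) (Fin 4) ℂ) (φ : C4) (hφ : mulVecE A φ = φ) (c : ℂ) :
    mulVecE (NormedSpace.exp (c • A)) φ = Complex.exp c • φ := by
  have hw : A.mulVec ((WithLp.equiv 2 _) φ) = (WithLp.equiv 2 _) φ := by
    have := congrArg (WithLp.equiv 2 (Fin 4 → ℂ)) hφ
    simpa [mulVecE] using this
  simp [mulVecE, exp_eig A φ.ofLp (by simpa using hw) c]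


/-- The local plane-wave ansatz F(x) = exp(-i(α·k)ξ((x-a)·k)) e^{iλx·k} φ₀ on a ball Bᵣ(a)
has norm one and satisfies (-iα·∇)F = (λ - η̃((x-a)·k))F on the ball. -/
theorem stmt18 (lam : ℝ) (k : R3) (hk : ‖k‖ = 1) (a : R3) (r : ℝ) (hr : 0 < r)
    (ηt : ℝ → ℝ) (hη : ContDiffOn ℝ (⊤ : ℕ∞) ηt (Set.Ioo (-r) r))
    (ξ : ℝ → ℝ) (hξ : ∀ t, ξ t = ∫ τ in (0:ℝ)..t, ηt τ)
    (φ₀ : C4) (hφ : ‖φ₀‖ = 1) (hφk : mulVecE (alphaDot k) φ₀ = φ₀)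
    (F : R3 → C4)
    (hF : ∀ x, F x = mulVecE
        (NormedSpace.exp ((-(I * (ξ (⟪x - a, k⟫ : ℝ)))) • alphaDot k))
        (Complex.exp (I * lam * (⟪x, k⟫ : ℝ)) • φ₀)) :
    ∀ x ∈ Metric.ball a r, ‖F x‖ = 1 ∧
      diracOp F x = ((((lam : ℝ) - ηt (⟪x - a, k⟫ : ℝ) : ℝ)) : ℂ) • F x := by
  -- the scalar phase
  set E : R3 → ℂ := fun y => I * lam * (⟪y, k⟫ : ℝ) + -(I * (ξ (⟪y - a, k⟫ : ℝ))) with hE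
  have hFG : ∀ y, F y = Complex.exp (E y) • φ₀ := by
    intro y
    rw [hF y, mulVecE_smul, mulVecE_exp_eig _ _ hφk, smul_smul, ← Complex.exp_add]
  intro x hx
  -- derivative of ξ at t := ⟪x-a,k⟫
  set t : ℝ := (⟪x - a, k⟫ : ℝ) with htdef
  have ht : t ∈ Set.Ioo (-r) r := by
    have h1 : |t| ≤ ‖x - a‖ * ‖k‖ := abs_real_inner_le_norm _ _
    have h2 : ‖x - a‖ < r := by simpa [dist_eq_norm] using hx
    rw [hk, mul_one] at h1
    constructor
    · linarith [neg_abs_le t]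
    · linarith [le_abs_self t]
  have h0 : (0:ℝ) ∈ Set.Ioo (-r) r := by constructor <;> linarith
  have hcont : ContinuousOn ηt (Set.Ioo (-r) r) := hη.continuousOn
  have hξd : HasDerivAt ξ (ηt t) t := by
    have hint : IntervalIntegrable ηt volume 0 t :=
      (hcont.mono (Set.ordConnected_Ioo.uIcc_subset h0 ht)).intervalIntegrable
    have hmeas : StronglyMeasurableAtFilter ηt (nhds t) volume :=
      ContinuousOn.stronglyMeasurableAtFilter isOpen_Ioo hcont t ht
    have hca : ContinuousAt ηt t := hcont.continuousAt (Ioo_mem_nhds ht.1 ht.2)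
    have := intervalIntegral.integral_hasDerivAt_right hint hmeas hca
    have hfun : ξ = fun u => ∫ τ in (0:ℝ)..u, ηt τ := funext hξ
    rw [hfun]
    exact this
  -- derivative of inner products
  set B : R3 →L[ℝ] ℝ := innerSL ℝ k with hB
  have hBval : ∀ j : Fin 3, B (EuclideanSpace.single j 1) = k j := by
    intro j
    simp [hB, innerSL_apply_apply, EuclideanSpace.inner_single_right]
  have hg : HasFDerivAt (fun y : R3 => (⟪y - a, k⟫ : ℝ)) B x := by
    have : (fun y : R3 => (⟪y - a, k⟫ : ℝ)) = fun y => B y - B a := by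
      funext y; simp [hB, innerSL_apply_apply, inner_sub_left, real_inner_comm, mul_comm]
    rw [this]
    exact B.hasFDerivAt.sub_const (B a)
  have hh : HasFDerivAt (fun y : R3 => (⟪y, k⟫ : ℝ)) B x := by
    have : (fun y : R3 => (⟪y, k⟫ : ℝ)) = fun y => B y := by
      funext y; simp [hB, innerSL_apply_apply, real_inner_comm, mul_comm]
    rw [this]; exact B.hasFDerivAt
  -- derivative of the phase E
  have hξg : HasFDerivAt (fun y : R3 => ξ (⟪y - a, k⟫ : ℝ)) (ηt t • B) x :=
    hξd.comp_hasFDerivAt x hg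
  set E' : R3 →L[ℝ] ℂ :=
    (I * lam) • (Complex.ofRealCLM.comp B) + -(I • (Complex.ofRealCLM.comp (ηt t • B))) with hE'
  have hEd : HasFDerivAt E E' x := by
    have h1 : HasFDerivAt (fun y : R3 => ((⟪y, k⟫ : ℝ) : ℂ))
        (Complex.ofRealCLM.comp B) x := Complex.ofRealCLM.hasFDerivAt.comp x hh
    have h2 : HasFDerivAt (fun y : R3 => ((ξ (⟪y - a, k⟫ : ℝ) : ℝ) : ℂ))
        (Complex.ofRealCLM.comp (ηt t • B)) x := Complex.ofRealCLM.hasFDerivAt.comp x hξg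
    exact (h1.const_mul (I * lam)).add (h2.const_mul I).neg
  have hGd : HasFDerivAt (fun y => Complex.exp (E y)) (Complex.exp (E x) • E') x := hEd.cexp
  have hFd : HasFDerivAt F ((Complex.exp (E x) • E').smulRight φ₀) x := by
    have : F = fun y => Complex.exp (E y) • φ₀ := funext hFG
    rw [this]
    exact hGd.smul_const φ₀
  have hfderiv : fderiv ℝ F x = (Complex.exp (E x) • E').smulRight φ₀ := hFd.fderiv
  have hE'val : ∀ j : Fin 3, E' (EuclideanSpace.single j 1)
      = (I * lam - I * ηt t) * (k j : ℂ) := by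
    intro j
    simp [hE', hBval j]
    ring
  constructor
  · rw [hFG x, norm_smul, hφ, mul_one]
    rw [Complex.norm_exp]
    have : (E x).re = 0 := by
      simp [hE, Complex.add_re, Complex.mul_re]
    rw [this, Real.exp_zero]
  · rw [diracOp]
    have hterm : ∀ j : Fin 3,
        mulVecE (diracAlpha j) (fderiv ℝ F x (EuclideanSpace.single j 1))
        = ((Complex.exp (E x) * (I * lam - I * ηt t)) * (k j : ℂ)) • mulVecE (diracAlpha j) φ₀ := by
      intro j
      rw [hfderiv]
      simp only [ContinuousLinearMap.smulRight_apply, ContinuousLinearMap.smul_apply]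
      rw [hE'val j, mulVecE_smul, smul_eq_mul, ← mul_assoc]
    rw [Finset.sum_congr rfl (fun j _ => hterm j)]
    have hsum : ∑ j : Fin 3, ((Complex.exp (E x) * (I * lam - I * ηt t)) * (k j : ℂ))
          • mulVecE (diracAlpha j) φ₀
        = (Complex.exp (E x) * (I * lam - I * ηt t)) • φ₀ := by
      calc ∑ j : Fin 3, ((Complex.exp (E x) * (I * lam - I * ηt t)) * (k j : ℂ))
            • mulVecE (diracAlpha j) φ₀
          = (Complex.exp (E x) * (I * lam - I * ηt t))
              • ∑ j : Fin 3, (k j : ℂ) • mulVecE (diracAlpha j) φ₀ := by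
            rw [Finset.smul_sum]
            exact Finset.sum_congr rfl fun j _ => by rw [smul_smul]
        _ = (Complex.exp (E x) * (I * lam - I * ηt t)) • mulVecE (alphaDot k) φ₀ := by
            congr 1
            rw [alphaDot, mulVecE_sum]
            exact Finset.sum_congr rfl fun j _ => (mulVecE_msmul _ _ _).symm
        _ = _ := by rw [hφk]
    rw [hsum, hFG x, smul_smul, smul_smul]
    congr 1
    have : (-I) * (Complex.exp (E x) * (I * lam - I * ηt t))
        = ((lam : ℂ) - (ηt t : ℂ)) * Complex.exp (E x) := by
      ring_nf
      simp [Complex.I_sq]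
      ring
    rw [this]
    push_cast
    ring
end
end
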